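/- Let Q be the m-Kronecker quiver with m ≥ 3, and let d = (d₁,d₂) satisfy d₁² - m·d₁d₂ + d₂² < 0. Then for 0 < x < d₁, the function c_d(x) = (1/2)(mx + d₂ - √((mx-d₂)² + 4x(d₁-x))) satisfies c_d(x) > (d₂/d₁)·x. -/

import Mathlib

/-!
Writing `A = m x + d₂` and `D = (m x - d₂)² + 4 x (d₁ - x)`, the claim is `√D < A - 2 (d₂/d₁) x`.
The right-hand side is the convex combination `(1 - x/d₁) d₂ + (x/d₁) (m d₁ - d₂)` of two positive
numbers, and the difference of squares factors as `(A - 2 (d₂/d₁) x)² - D = (4x/d₁²)(d₁ - x)·(-(d,d))`,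
which is positive exactly because the Euler form `(d,d)` is negative.
-/

section

variable {m a b x : ℝ}

lemma mul_add_sub_two_div_mul_pos (ha : 0 < a) (hb : 0 < b) (hba : b < m * a)
    (hx0 : 0 ≤ x) (hxa : x ≤ a) : 0 < m * x + b - 2 * (b / a) * x := by
  have hconvex : m * x + b - 2 * (b / a) * x = (1 - x / a) * b + x / a * (m * a - b) := by
    field_simp
    ring
  rw [hconvex]
  rcases ((div_le_one ha).mpr hxa).lt_or_eq with hw | hw
  · exact add_pos_of_pos_of_nonneg (mul_pos (sub_pos.mpr hw) hb)
      (mul_nonneg (div_nonneg hx0 ha.le) (sub_nonneg.mpr hba.le))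
  · rw [hw]
    linarith

lemma sq_sub_two_div_mul_sub_discr (ha : a ≠ 0) :
    (m * x + b - 2 * (b / a) * x) ^ 2 - ((m * x - b) ^ 2 + 4 * x * (a - x))
      = 4 * x / a ^ 2 * (a - x) * -(a ^ 2 - m * a * b + b ^ 2) := by
  field_simp
  ring

theorem div_mul_lt_half_mul_sub_sqrt (hb : 0 ≤ b) (hd : a ^ 2 - m * a * b + b ^ 2 < 0)
    (hx0 : 0 < x) (hxa : x < a) :
    b / a * x < 1 / 2 * (m * x + b - √((m * x - b) ^ 2 + 4 * x * (a - x))) := by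
  have ha : 0 < a := hx0.trans hxa
  have hb : 0 < b := hb.lt_of_ne (by rintro rfl; nlinarith)
  have hba : b < m * a := by nlinarith
  have hpos := mul_add_sub_two_div_mul_pos ha hb hba hx0.le hxa.le
  have hgap : 0 < 4 * x / a ^ 2 * (a - x) * -(a ^ 2 - m * a * b + b ^ 2) := by
    have : 0 < a - x := sub_pos.mpr hxa
    have : 0 < -(a ^ 2 - m * a * b + b ^ 2) := neg_pos.mpr hd
    positivity
  have hsqrt : √((m * x - b) ^ 2 + 4 * x * (a - x)) < m * x + b - 2 * (b / a) * x := by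
    rw [Real.sqrt_lt' hpos]
    linarith [sq_sub_two_div_mul_sub_discr (m := m) (b := b) (x := x) ha.ne']
  linarith

end

theorem stmt_15_general (m : ℕ) (d₁ d₂ : ℕ)
    (hd : (d₁ : ℝ) ^ 2 - (m : ℝ) * d₁ * d₂ + (d₂ : ℝ) ^ 2 < 0)
    (x : ℝ) (hx0 : 0 < x) (hx1 : x < (d₁ : ℝ)) :
    (1 / 2) * ((m : ℝ) * x + d₂ -
        Real.sqrt (((m : ℝ) * x - d₂) ^ 2 + 4 * x * ((d₁ : ℝ) - x)))
      > ((d₂ : ℝ) / d₁) * x :=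
  div_mul_lt_half_mul_sub_sqrt (Nat.cast_nonneg _) hd hx0 hx1

/-- For the m-Kronecker quiver with m ≥ 3 and a dimension vector
d = (d₁,d₂) with d₁² - m·d₁d₂ + d₂² < 0, for 0 < x < d₁ the function
c_d(x) = (1/2)(mx + d₂ - √((mx-d₂)² + 4x(d₁-x))) satisfies c_d(x) > (d₂/d₁)·x. -/
theorem stmt_15 (m : ℕ) (hm : 3 ≤ m) (d₁ d₂ : ℕ)
    (hd : (d₁ : ℝ) ^ 2 - (m : ℝ) * d₁ * d₂ + (d₂ : ℝ) ^ 2 < 0)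
    (x : ℝ) (hx0 : 0 < x) (hx1 : x < (d₁ : ℝ)) :
    (1 / 2) * ((m : ℝ) * x + d₂ -
        Real.sqrt (((m : ℝ) * x - d₂) ^ 2 + 4 * x * ((d₁ : ℝ) - x)))
      > ((d₂ : ℝ) / d₁) * x :=
  stmt_15_general m d₁ d₂ hd x hx0 hx1
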